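/- Let A be a Banach lattice algebra with identity e and let p ∈ A be a band projection (p ≥ 0 and for every x ≥ 0: pxp ≤ x and p²xp² = pxp). Then the following are equivalent: (i) p is an order idempotent (p² = p and p ≤ e); (ii) p² = p; (iii) p ∈ A_e, i.e., p ≤ λ•e for some λ ≥ 0; (iv) there exist λ > ‖p‖ and q ∈ A with q ≥ 0 such that q(λ•e + p) = e = (λ•e + p)q, i.e., λ•e + p is invertible with positive inverse for some λ > ‖p‖. -/

import Mathlib

/-!
The identity is positive: the powers of `e⁺ = e + e⁻` dominate `e + n • e⁻` and have norm at
most one, so `n • e⁻` stays bounded. The band inequalities at `x = e` and `x = p` give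
`p² ≤ e`, `p⁴ = p²` and `p³ ≤ p`.

If `p ≤ μ • e`, multiplying `e - p²` repeatedly by `μ • e - p ≥ 0` shows
`n • (p - p³) ≤ μ • (e - p²)` for all `n`, hence `p³ = p`. Then `p² - p` is sent to its
negative by left multiplication with `p`, a positive operator dominated by `μ • id`; such an
operator has no eigenvalue `-1`, so `p² = p`.

A positive left inverse `q` of `λ • e + p` gives `λ • e - p = λ² • q - q p²`. This is positive:
either `λ ≥ 1` and `q p² ≤ q`, or `‖p²‖ < 1` and the idempotent `p²` vanishes. Conversely, for an
order idempotent `p` the positive inverse is `((λ + 1) • e - p) / (λ (λ + 1))`.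
-/

section NormedLattice

variable {E : Type*} [NormedAddCommGroup E] [Lattice E] [HasSolidNorm E] [IsOrderedAddMonoid E]
  [NormedSpace ℝ E]

theorem eq_zero_of_forall_nsmul_le_of_norm_le {x : E} (hx : 0 ≤ x) (C : ℝ)
    (h : ∀ n : ℕ, ∃ y, n • x ≤ y ∧ ‖y‖ ≤ C) : x = 0 := by
  have hbound : ∀ n : ℕ, n * ‖x‖ ≤ C := fun n => by
    obtain ⟨y, hxy, hy⟩ := h n
    calc n * ‖x‖ = ‖n • x‖ := by rw [RCLike.norm_nsmul ℝ, nsmul_eq_mul]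
      _ ≤ ‖y‖ := HasSolidNorm.solid <| by
        rw [abs_of_nonneg (nsmul_nonneg hx n)]
        exact hxy.trans (le_abs_self y)
      _ ≤ C := hy
  by_contra hne
  have hpos : 0 < ‖x‖ := norm_pos_iff.2 hne
  obtain ⟨n, hn⟩ := exists_nat_gt (C / ‖x‖)
  rw [div_lt_iff₀ hpos] at hn
  linarith [hbound n]

end NormedLattice

section VectorLattice

variable {E : Type*} [AddCommGroup E] [Lattice E] [IsOrderedAddMonoid E] [Module ℝ E]
  [PosSMulMono ℝ E]

theorem LinearMap.eq_zero_of_apply_eq_neg {S : E →ₗ[ℝ] E} {c : ℝ} (hc : 0 ≤ c)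
    (hS : ∀ x, 0 ≤ x → 0 ≤ S x ∧ S x ≤ c • x) {b : E} (hb : S b = -b) : b = 0 := by
  have hk : 0 < c + 1 := by linarith
  -- `u` is dominated by multiples of both `b⁺` and `b⁻`, which are disjoint
  set u := S b⁺ + b⁺
  have hu : u = S b⁻ + b⁻ := by
    have h : S b⁺ - S b⁻ = -(b⁺ - b⁻) := by rw [← map_sub, posPart_sub_negPart, hb]
    linear_combination (norm := module) h
  have hdom : ∀ x, 0 ≤ x → (c + 1)⁻¹ • (S x + x) ≤ x := fun x hx => by
    have h : S x + x ≤ (c + 1) • x := by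
      rw [add_smul, one_smul]
      exact add_le_add_left (hS x hx).2 x
    simpa [smul_smul, inv_mul_cancel₀ hk.ne'] using
      smul_le_smul_of_nonneg_left h (inv_nonneg.2 hk.le)
  have hu0 : u ≤ 0 := by
    have h : (c + 1)⁻¹ • u ≤ 0 := by
      rw [← posPart_inf_negPart_eq_zero b]
      exact le_inf (hdom _ (posPart_nonneg b)) (hu ▸ hdom _ (negPart_nonneg b))
    simpa [smul_smul, mul_inv_cancel₀ hk.ne'] using smul_nonpos_of_nonneg_of_nonpos hk.le h
  have hpos : b⁺ = 0 :=
    le_antisymm ((le_add_of_nonneg_left (hS _ (posPart_nonneg b)).1).trans hu0) (posPart_nonneg b)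
  have hneg : b⁻ = 0 :=
    le_antisymm ((le_add_of_nonneg_left (hS _ (negPart_nonneg b)).1).trans (hu ▸ hu0))
      (negPart_nonneg b)
  rw [← posPart_sub_negPart b, hpos, hneg, sub_zero]

end VectorLattice

section LatticeAlgebra

variable {A : Type*}

theorem identity_nonneg_of_norm_eq_one [NormedAddCommGroup A] [Lattice A] [HasSolidNorm A]
    [IsOrderedAddMonoid A] [NormedSpace ℝ A] (mul : A →ₗ[ℝ] A →ₗ[ℝ] A)
    (norm_mul_le : ∀ a b : A, ‖mul a b‖ ≤ ‖a‖ * ‖b‖)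
    (mul_nonneg : ∀ a b : A, 0 ≤ a → 0 ≤ b → 0 ≤ mul a b)
    {e : A} (one_mul : ∀ a : A, mul e a = a) (mul_one : ∀ a : A, mul a e = a)
    (norm_e : ‖e‖ = 1) : 0 ≤ e := by
  have he : e⁺ = e + e⁻ := eq_add_of_sub_eq (posPart_sub_negPart e)
  have hnorm : ‖e⁺‖ ≤ 1 := norm_e ▸ HasSolidNorm.solid (by
    rw [abs_of_nonneg (posPart_nonneg e)]
    exact sup_le (le_abs_self e) (abs_nonneg e))
  -- `y` is the `n`-th power of `e⁺ = e + e⁻`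
  have hpow : ∀ n : ℕ, ∃ y, e + n • e⁻ ≤ y ∧ ‖y‖ ≤ 1 := by
    intro n
    induction n with
    | zero => exact ⟨e, by simp, norm_e.le⟩
    | succ n ih =>
      obtain ⟨y, hy, hy1⟩ := ih
      refine ⟨mul y e⁺, ?_, ?_⟩
      · have hexp : mul (e + n • e⁻) e⁺ = e + (n + 1) • e⁻ + n • mul e⁻ e⁻ := by
          simp only [map_add, map_nsmul, LinearMap.add_apply, LinearMap.smul_apply, one_mul]
          rw [he, map_add, mul_one]
          module
        have hmono : mul (e + n • e⁻) e⁺ ≤ mul y e⁺ := by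
          have h := mul_nonneg _ _ (sub_nonneg.2 hy) (posPart_nonneg e)
          rwa [map_sub, LinearMap.sub_apply, sub_nonneg] at h
        rw [hexp] at hmono
        exact (le_add_of_nonneg_right
          (nsmul_nonneg (mul_nonneg _ _ (negPart_nonneg e) (negPart_nonneg e)) n)).trans hmono
      · calc ‖mul y e⁺‖ ≤ ‖y‖ * ‖e⁺‖ := norm_mul_le y e⁺
          _ ≤ 1 := mul_le_one₀ hy1 (norm_nonneg _) hnorm
  have hneg : e⁻ = 0 := by
    refine eq_zero_of_forall_nsmul_le_of_norm_le (negPart_nonneg e) 2 fun n => ?_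
    obtain ⟨y, hy, hy1⟩ := hpow n
    refine ⟨y - e, le_sub_iff_add_le'.2 hy, ?_⟩
    calc ‖y - e‖ ≤ ‖y‖ + ‖e‖ := norm_sub_le y e
      _ ≤ 2 := by linarith
  exact negPart_eq_zero.1 hneg

theorem eq_zero_of_mul_self_eq_self_of_norm_lt_one [NormedAddCommGroup A] [Module ℝ A]
    (mul : A →ₗ[ℝ] A →ₗ[ℝ] A) (norm_mul_le : ∀ a b : A, ‖mul a b‖ ≤ ‖a‖ * ‖b‖)
    {a : A} (ha : mul a a = a) (hlt : ‖a‖ < 1) : a = 0 := by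
  by_contra hne
  have hpos : 0 < ‖a‖ := norm_pos_iff.2 hne
  have h : ‖a‖ ≤ ‖a‖ * ‖a‖ := by simpa only [ha] using norm_mul_le a a
  nlinarith

theorem mul_mul_self_eq_self_of_le_smul [NormedAddCommGroup A] [Lattice A] [HasSolidNorm A]
    [IsOrderedAddMonoid A] [NormedSpace ℝ A] [PosSMulMono ℝ A] (mul : A →ₗ[ℝ] A →ₗ[ℝ] A)
    (mul_assoc : ∀ a b c : A, mul (mul a b) c = mul a (mul b c))
    (mul_nonneg : ∀ a b : A, 0 ≤ a → 0 ≤ b → 0 ≤ mul a b)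
    {e : A} (one_mul : ∀ a : A, mul e a = a) (mul_one : ∀ a : A, mul a e = a)
    {p : A} (hpe : mul p p ≤ e) (hp4 : mul (mul p p) (mul p p) = mul p p)
    (hp3 : mul p (mul p p) ≤ p) {μ : ℝ} (hμ : 0 < μ) (hpμ : p ≤ μ • e) :
    mul p (mul p p) = p := by
  set w := e - mul p p
  set r := p - mul p (mul p p)
  have hpw : mul p w = r := by simp only [w, r, map_sub, mul_one]
  have hpr : mul p r = 0 := by simp only [r, map_sub]; rw [← mul_assoc, hp4, sub_self]
  -- multiplying by `μ • e - p ≥ 0` raises the coefficient of `r` by one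
  have hbound : ∀ n : ℕ, n • r ≤ μ • w := by
    intro n
    induction n with
    | zero => simpa using smul_nonneg hμ.le (sub_nonneg.2 hpe)
    | succ n ih =>
      have h := mul_nonneg _ _ (sub_nonneg.2 hpμ) (sub_nonneg.2 ih)
      have hexp : mul (μ • e - p) (μ • w - n • r) = μ • (μ • w - (n + 1) • r) := by
        simp only [map_sub, map_smul, map_nsmul, LinearMap.sub_apply, LinearMap.smul_apply,
          one_mul, hpw, hpr]
        module
      rw [hexp] at h
      simpa [smul_smul, inv_mul_cancel₀ hμ.ne'] using smul_nonneg (inv_nonneg.2 hμ.le) h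
  have hr : r = 0 := eq_zero_of_forall_nsmul_le_of_norm_le (sub_nonneg.2 hp3) ‖μ • w‖
    fun n => ⟨μ • w, hbound n, le_rfl⟩
  exact (sub_eq_zero.1 hr).symm

theorem mul_self_eq_self_of_mul_mul_self_eq_self [AddCommGroup A] [Lattice A]
    [IsOrderedAddMonoid A] [Module ℝ A] [PosSMulMono ℝ A] (mul : A →ₗ[ℝ] A →ₗ[ℝ] A)
    (mul_nonneg : ∀ a b : A, 0 ≤ a → 0 ≤ b → 0 ≤ mul a b)
    {e : A} (one_mul : ∀ a : A, mul e a = a) {p : A} (hp : 0 ≤ p)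
    (hcube : mul p (mul p p) = p) {μ : ℝ} (hμ : 0 ≤ μ) (hpμ : p ≤ μ • e) : mul p p = p := by
  have hS : ∀ x, 0 ≤ x → 0 ≤ mul p x ∧ mul p x ≤ μ • x := fun x hx => by
    refine ⟨mul_nonneg _ _ hp hx, ?_⟩
    have h := mul_nonneg _ _ (sub_nonneg.2 hpμ) hx
    rwa [map_sub, LinearMap.sub_apply, map_smul, LinearMap.smul_apply, one_mul, sub_nonneg] at h
  have hneg : mul p (mul p p - p) = -(mul p p - p) := by rw [map_sub, hcube, neg_sub]
  exact sub_eq_zero.1 (LinearMap.eq_zero_of_apply_eq_neg hμ hS hneg)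

theorem le_smul_of_mul_smul_add_eq [NormedAddCommGroup A] [Lattice A]
    [IsOrderedAddMonoid A] [Module ℝ A] [PosSMulMono ℝ A] (mul : A →ₗ[ℝ] A →ₗ[ℝ] A)
    (mul_assoc : ∀ a b c : A, mul (mul a b) c = mul a (mul b c))
    (norm_mul_le : ∀ a b : A, ‖mul a b‖ ≤ ‖a‖ * ‖b‖)
    (mul_nonneg : ∀ a b : A, 0 ≤ a → 0 ≤ b → 0 ≤ mul a b)
    {e : A} (one_mul : ∀ a : A, mul e a = a) (mul_one : ∀ a : A, mul a e = a)
    {p : A} (hpe : mul p p ≤ e) (hp4 : mul (mul p p) (mul p p) = mul p p)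
    {l : ℝ} (hl : ‖p‖ < l) {q : A} (hq : 0 ≤ q) (hqa : mul q (l • e + p) = e) : p ≤ l • e := by
  have key : l • e - p = l ^ 2 • q - mul q (mul p p) :=
    calc l • e - p = mul (mul q (l • e + p)) (l • e - p) := by rw [hqa, one_mul]
      _ = mul q (mul (l • e + p) (l • e - p)) := mul_assoc _ _ _
      _ = l ^ 2 • q - mul q (mul p p) := by
        simp only [map_add, map_sub, map_smul, LinearMap.add_apply, LinearMap.smul_apply,
          one_mul, mul_one]
        module
  rw [← sub_nonneg, key]
  rcases le_or_gt 1 l with hl1 | hl1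
  · have h : l ^ 2 • q - mul q (mul p p) = (l ^ 2 - 1) • q + mul q (e - mul p p) := by
      rw [map_sub, mul_one]
      module
    rw [h]
    exact add_nonneg (smul_nonneg (by nlinarith) hq) (mul_nonneg _ _ hq (sub_nonneg.2 hpe))
  · have hpp : mul p p = 0 := by
      refine eq_zero_of_mul_self_eq_self_of_norm_lt_one mul norm_mul_le hp4 ?_
      calc ‖mul p p‖ ≤ ‖p‖ * ‖p‖ := norm_mul_le p p
        _ < 1 := by nlinarith [norm_nonneg p]
    rw [hpp, map_zero, sub_zero]
    exact smul_nonneg (sq_nonneg l) hq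

theorem exists_nonneg_inverse_smul_add [AddCommGroup A] [Lattice A]
    [IsOrderedAddMonoid A] [Module ℝ A] [PosSMulMono ℝ A] (mul : A →ₗ[ℝ] A →ₗ[ℝ] A)
    {e : A} (he : 0 ≤ e) (one_mul : ∀ a : A, mul e a = a) (mul_one : ∀ a : A, mul a e = a)
    {p : A} (hpp : mul p p = p) (hpe : p ≤ e) {l : ℝ} (hl : 0 < l) :
    ∃ q : A, 0 ≤ q ∧ mul q (l • e + p) = e ∧ mul (l • e + p) q = e := by
  have hc : l * (l + 1) ≠ 0 := by positivity
  have hleft : mul ((l + 1) • e - p) (l • e + p) = (l * (l + 1)) • e := by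
    simp only [map_add, map_sub, map_smul, LinearMap.sub_apply, LinearMap.smul_apply, one_mul,
      mul_one, hpp]
    module
  have hright : mul (l • e + p) ((l + 1) • e - p) = (l * (l + 1)) • e := by
    simp only [map_add, map_sub, map_smul, LinearMap.add_apply, LinearMap.smul_apply, one_mul,
      mul_one, hpp]
    module
  refine ⟨(l * (l + 1))⁻¹ • ((l + 1) • e - p), ?_, ?_, ?_⟩
  · refine smul_nonneg (by positivity) ?_
    have h : (l + 1) • e - p = (e - p) + l • e := by module
    rw [h]
    exact add_nonneg (sub_nonneg.2 hpe) (smul_nonneg hl.le he)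
  · rw [map_smul, LinearMap.smul_apply, hleft, smul_smul, inv_mul_cancel₀ hc, one_smul]
  · rw [map_smul, hright, smul_smul, inv_mul_cancel₀ hc, one_smul]

end LatticeAlgebra

theorem band_projection_order_idempotent_tfae
    {A : Type*} [NormedAddCommGroup A] [Lattice A] [HasSolidNorm A]
    [IsOrderedAddMonoid A] [NormedSpace ℝ A]
    [PosSMulStrictMono ℝ A]
    (mul : A →ₗ[ℝ] A →ₗ[ℝ] A)
    (mul_assoc : ∀ a b c : A, mul (mul a b) c = mul a (mul b c))
    (norm_mul_le : ∀ a b : A, ‖mul a b‖ ≤ ‖a‖ * ‖b‖)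
    (mul_nonneg : ∀ a b : A, 0 ≤ a → 0 ≤ b → 0 ≤ mul a b)
    (e : A) (one_mul : ∀ a : A, mul e a = a) (mul_one : ∀ a : A, mul a e = a)
    (norm_e : ‖e‖ = 1)
    -- `p` is a band projection
    (p : A) (hp : 0 ≤ p)
    (hbp : ∀ x : A, 0 ≤ x → mul p (mul x p) ≤ x ∧
      mul (mul p p) (mul x (mul p p)) = mul p (mul x p)) :
    [ mul p p = p ∧ p ≤ e,
      mul p p = p,
      ∃ l : ℝ, 0 ≤ l ∧ p ≤ l • e,
      ∃ l : ℝ, ‖p‖ < l ∧ ∃ q : A, 0 ≤ q ∧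
        mul q (l • e + p) = e ∧ mul (l • e + p) q = e ].TFAE := by
  have he : 0 ≤ e :=
    identity_nonneg_of_norm_eq_one mul norm_mul_le mul_nonneg one_mul mul_one norm_e
  obtain ⟨hpe, hp4⟩ : mul p p ≤ e ∧ mul (mul p p) (mul p p) = mul p p := by
    simpa only [one_mul] using hbp e he
  tfae_have 1 → 2 := And.left
  tfae_have 2 → 3 := fun hpp => ⟨1, zero_le_one, by rwa [one_smul, ← hpp]⟩
  tfae_have 3 → 1 := by
    rintro ⟨l, hl, hle⟩
    have hpμ : p ≤ (l + 1) • e := hle.trans (smul_le_smul_of_nonneg_right (by linarith) he)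
    have hcube := mul_mul_self_eq_self_of_le_smul mul mul_assoc mul_nonneg one_mul mul_one hpe hp4
      (hbp p hp).1 (by linarith) hpμ
    have hpp := mul_self_eq_self_of_mul_mul_self_eq_self mul mul_nonneg one_mul hp hcube
      (by linarith) hpμ
    exact ⟨hpp, hpp ▸ hpe⟩
  tfae_have 1 → 4 := fun ⟨hpp, hple⟩ => ⟨‖p‖ + 1, lt_add_one _,
    exists_nonneg_inverse_smul_add mul he one_mul mul_one hpp hple (by positivity)⟩
  tfae_have 4 → 3 := fun ⟨l, hl, q, hq, hqa, _⟩ => ⟨l, (norm_nonneg p).trans hl.le,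
    le_smul_of_mul_smul_add_eq mul mul_assoc norm_mul_le mul_nonneg one_mul mul_one hpe hp4 hl
      hq hqa⟩
  tfae_finish
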